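/- arXiv:1201.3492 — 2 statements merged into one kernel-verified Lean document; each statement's English description precedes it below -/
import Mathlib

section
/- Fix an integer q and a complex number s, and define g_{s,q} : ℍ → ℂ by g_{s,q}(z) = (Im z)^s · (conj z)^q · |z|^{−s−q}, where (Im z)^s and |z|^{−s−q} are complex powers of positive reals. Then g_{s,q} is smooth and for every z = x + iy ∈ ℍ, y²·(∂²g_{s,q}/∂x² + ∂²g_{s,q}/∂y²)(z) − 2iqy·(∂g_{s,q}/∂x)(z) = s(s−1)·g_{s,q}(z) − (s²−q²)·g_{s+2,q}(z). -/
open Complex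

/-- The function `g_{s,q}(z) = (Im z)^s (conj z)^q |z|^{−s−q}` on the upper half-plane. -/
noncomputable def gsq (s : ℂ) (q : ℤ) (z : ℂ) : ℂ :=
  ((z.im : ℂ) ^ s) * (starRingEnd ℂ z) ^ q * (((‖z‖ : ℝ) : ℂ) ^ (-s - (q : ℂ)))

/-! ### Auxiliary lemmas -/

private lemma ev_cpow (a : ℂ) {t : ℝ} (ht : 0 < t) :
    (fun t : ℝ => (t:ℂ) ^ a) =ᶠ[nhds t] fun t : ℝ => Complex.exp (Complex.log (t:ℂ) * a) := by
  filter_upwards [eventually_gt_nhds ht] with u hu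
  exact Complex.cpow_def_of_ne_zero (by exact_mod_cast hu.ne') a

private lemma hasDerivAt_ofReal_cpow_const'' (a : ℂ) {t : ℝ} (ht : 0 < t) :
    HasDerivAt (fun t : ℝ => (t:ℂ) ^ a) (a * (t:ℂ) ^ (a - 1)) t := by
  have h0 : (fun t : ℝ => Complex.exp (Complex.log (t:ℂ) * a)) =ᶠ[nhds t]
      fun t : ℝ => Complex.exp ((Real.log t : ℂ) * a) := by
    filter_upwards [eventually_gt_nhds ht] with u hu
    rw [Complex.ofReal_log hu.le]
  have h1 : HasDerivAt (fun t : ℝ => Complex.exp ((Real.log t : ℂ) * a))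
      (Complex.exp ((Real.log t : ℂ) * a) * (((t⁻¹ : ℝ) : ℂ) * a)) t :=
    (((Real.hasDerivAt_log ht.ne').ofReal_comp).mul_const a).cexp
  have h2 : HasDerivAt (fun t : ℝ => (t:ℂ) ^ a)
      (Complex.exp ((Real.log t : ℂ) * a) * (((t⁻¹ : ℝ) : ℂ) * a)) t :=
    h1.congr_of_eventuallyEq ((ev_cpow a ht).trans h0)
  convert h2 using 1
  have htC : (t:ℂ) ≠ 0 := by exact_mod_cast ht.ne'
  rw [Complex.cpow_sub _ _ htC, Complex.cpow_one,
    Complex.cpow_def_of_ne_zero htC, Complex.ofReal_log ht.le]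
  field_simp
  push_cast; field_simp

private lemma contDiffAt_ofReal_cpow_const' (a : ℂ) {t : ℝ} (ht : 0 < t) :
    ContDiffAt ℝ (⊤ : ℕ∞) (fun t : ℝ => (t:ℂ) ^ a) t := by
  have h1 : ContDiffAt ℝ (⊤ : ℕ∞) (fun t : ℝ => Complex.exp (Complex.log (t:ℂ) * a)) t := by
    have hlog : ContDiffAt ℝ (⊤ : ℕ∞) (fun t : ℝ => Complex.log (t:ℂ)) t :=
      ((Complex.contDiffAt_log (by simp [Complex.mem_slitPlane_iff, ht])).restrict_scalars ℝ).comp t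
        Complex.ofRealCLM.contDiff.contDiffAt
    exact Complex.contDiff_exp.contDiffAt.comp t (hlog.mul contDiffAt_const)
  exact h1.congr_of_eventuallyEq (ev_cpow a ht)

/-- Auxiliary family of functions. -/
noncomputable def Paux (a : ℂ) (m : ℤ) (b : ℂ) (z : ℂ) : ℂ :=
  ((z.im : ℂ) ^ a) * ((starRingEnd ℂ) z) ^ m * ((Complex.normSq z : ℂ) ^ b)

private lemma hasFDerivAt_Paux (a : ℂ) (m : ℤ) (b : ℂ) {z : ℂ} (hz : 0 < z.im) :
    ∃ D : ℂ →L[ℝ] ℂ, HasFDerivAt (Paux a m b) D z ∧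
      D 1 = (m:ℂ) * Paux a (m-1) b z + 2*b*(z.re:ℂ) * Paux a m (b-1) z ∧
      D Complex.I = a * Paux (a-1) m b z - Complex.I*(m:ℂ)*Paux a (m-1) b z
        + 2*b*(z.im:ℂ)*Paux a m (b-1) z := by
  have hz0 : z ≠ 0 := fun h => by simp [h] at hz
  have hc0 : (starRingEnd ℂ) z ≠ 0 := by simpa using hz0
  have hN : 0 < Complex.normSq z := Complex.normSq_pos.2 hz0
  have hA : HasFDerivAt (fun z : ℂ => ((z.im:ℝ):ℂ) ^ a)
      ((ContinuousLinearMap.smulRight (1 : ℝ →L[ℝ] ℝ) (a * ((z.im:ℝ):ℂ) ^ (a-1))).comp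
        Complex.imCLM) z :=
    ((hasDerivAt_ofReal_cpow_const'' a hz).hasFDerivAt).comp z Complex.imCLM.hasFDerivAt
  have hB : HasFDerivAt (fun z : ℂ => ((starRingEnd ℂ) z) ^ m)
      ((ContinuousLinearMap.restrictScalars ℝ
        (ContinuousLinearMap.smulRight (1 : ℂ →L[ℂ] ℂ)
          ((m:ℂ) * ((starRingEnd ℂ) z) ^ (m-1)))).comp
        (Complex.conjCLE.toContinuousLinearMap)) z :=
    (((hasDerivAt_zpow m ((starRingEnd ℂ) z) (Or.inl hc0)).hasFDerivAt).restrictScalars ℝ).comp z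
      (Complex.conjCLE.toContinuousLinearMap.hasFDerivAt)
  have hNS : HasFDerivAt (fun z : ℂ => z.re * z.re + z.im * z.im)
      ((z.re : ℝ) • Complex.reCLM + (z.re : ℝ) • Complex.reCLM
        + ((z.im : ℝ) • Complex.imCLM + (z.im : ℝ) • Complex.imCLM)) z := by
    have h := ((Complex.reCLM.hasFDerivAt (x := z)).mul (Complex.reCLM.hasFDerivAt (x := z))).add
      ((Complex.imCLM.hasFDerivAt (x := z)).mul (Complex.imCLM.hasFDerivAt (x := z)))
    exact h
  have hC : HasFDerivAt (fun z : ℂ => ((Complex.normSq z : ℝ):ℂ) ^ b)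
      ((ContinuousLinearMap.smulRight (1 : ℝ →L[ℝ] ℝ)
        (b * ((Complex.normSq z : ℝ):ℂ) ^ (b-1))).comp
        ((z.re : ℝ) • Complex.reCLM + (z.re : ℝ) • Complex.reCLM
          + ((z.im : ℝ) • Complex.imCLM + (z.im : ℝ) • Complex.imCLM))) z :=
    ((hasDerivAt_ofReal_cpow_const'' b hN).hasFDerivAt).comp z hNS
  have hP := (hA.mul hB).mul hC
  refine ⟨_, hP, ?_, ?_⟩ <;>
  · simp only [ContinuousLinearMap.add_apply, ContinuousLinearMap.smul_apply,
      ContinuousLinearMap.comp_apply, ContinuousLinearMap.smulRight_apply,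
      ContinuousLinearMap.coe_restrictScalars', Complex.imCLM_apply, Complex.reCLM_apply,
      ContinuousLinearMap.one_apply, ContinuousLinearEquiv.coe_coe, Complex.conjCLE_apply,
      Complex.one_im, Complex.one_re, Complex.I_im, Complex.I_re, map_one, Complex.conj_I,
      Paux, Pi.mul_apply, smul_eq_mul, Complex.real_smul, Complex.ofReal_zero, Complex.ofReal_one]
    push_cast
    ring

private lemma contDiffOn_Paux (a : ℂ) (m : ℤ) (b : ℂ) :
    ContDiffOn ℝ (⊤ : ℕ∞) (Paux a m b) {z : ℂ | 0 < z.im} := by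
  intro z hz
  have hz' : (0:ℝ) < z.im := hz
  have hz0 : z ≠ 0 := fun h => by simp [h] at hz'
  have hc0 : (starRingEnd ℂ) z ≠ 0 := by simpa using hz0
  have hN : 0 < Complex.normSq z := Complex.normSq_pos.2 hz0
  apply ContDiffAt.contDiffWithinAt
  have h1 : ContDiffAt ℝ (⊤ : ℕ∞) (fun z : ℂ => ((z.im:ℝ):ℂ) ^ a) z :=
    (contDiffAt_ofReal_cpow_const' a hz').comp z Complex.imCLM.contDiff.contDiffAt
  have h2 : ContDiffAt ℝ (⊤ : ℕ∞) (fun z : ℂ => ((starRingEnd ℂ) z) ^ m) z := by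
    have hz2 : ContDiffAt ℂ (⊤ : ℕ∞) (fun w : ℂ => w ^ m) ((starRingEnd ℂ) z) :=
      (DifferentiableOn.contDiffOn
        (fun w hw => (differentiableAt_zpow.2 (Or.inl hw)).differentiableWithinAt)
        isOpen_compl_singleton).contDiffAt (isOpen_compl_singleton.mem_nhds hc0)
    exact (hz2.restrict_scalars ℝ).comp z
      (Complex.conjCLE.toContinuousLinearMap.contDiff.contDiffAt)
  have h3 : ContDiffAt ℝ (⊤ : ℕ∞) (fun z : ℂ => ((Complex.normSq z : ℝ):ℂ) ^ b) z := by
    have hns : ContDiff ℝ (⊤ : ℕ∞) (fun z : ℂ => z.re * z.re + z.im * z.im) :=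
      (Complex.reCLM.contDiff.mul Complex.reCLM.contDiff).add
        (Complex.imCLM.contDiff.mul Complex.imCLM.contDiff)
    exact (contDiffAt_ofReal_cpow_const' b hN).comp z hns.contDiffAt
  exact (h1.mul h2).mul h3

private lemma gsq_eq_Paux (s : ℂ) (q : ℤ) {z : ℂ} (hz0 : z ≠ 0) :
    gsq s q z = Paux s q ((-s - (q:ℂ))/2) z := by
  have hN : 0 < Complex.normSq z := Complex.normSq_pos.2 hz0
  unfold gsq Paux
  congr 1
  have h1 : ((‖z‖ : ℝ) : ℂ) = ((Complex.normSq z : ℝ):ℂ) ^ ((1:ℂ)/2) := by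
    rw [Complex.norm_def, Real.sqrt_eq_rpow, Complex.ofReal_cpow hN.le]
    norm_num
  have him1 : -Real.pi < (Complex.log ((Complex.normSq z : ℝ):ℂ) * ((1:ℂ)/2)).im := by
    rw [← Complex.ofReal_log hN.le]
    simpa using Real.pi_pos
  have him2 : (Complex.log ((Complex.normSq z : ℝ):ℂ) * ((1:ℂ)/2)).im ≤ Real.pi := by
    rw [← Complex.ofReal_log hN.le]
    simpa using Real.pi_pos.le
  rw [h1, ← Complex.cpow_mul _ him1 him2]
  congr 1
  ring

set_option maxHeartbeats 2000000 in
/-- `g_{s,q}` is smooth on `ℍ` and satisfies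
`y²(∂²_x + ∂²_y)g_{s,q} − 2iqy ∂_x g_{s,q} = s(s−1) g_{s,q} − (s²−q²) g_{s+2,q}`. -/
theorem gsq_smooth_and_weighted_laplacian_eq (s : ℂ) (q : ℤ) :
    ContDiffOn ℝ (⊤ : ℕ∞) (gsq s q) {z : ℂ | 0 < z.im} ∧
    ∀ z : ℂ, 0 < z.im →
      ((z.im : ℂ)) ^ 2 *
          (fderiv ℝ (fun w => fderiv ℝ (gsq s q) w 1) z 1 +
            fderiv ℝ (fun w => fderiv ℝ (gsq s q) w Complex.I) z Complex.I) -
        2 * Complex.I * (q : ℂ) * ((z.im : ℂ)) * fderiv ℝ (gsq s q) z 1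
      = s * (s - 1) * gsq s q z - (s ^ 2 - (q : ℂ) ^ 2) * gsq (s + 2) q z := by
  set β : ℂ := (-s - (q:ℂ))/2 with hβ
  have hU : IsOpen {z : ℂ | 0 < z.im} := isOpen_lt continuous_const Complex.continuous_im
  have hgP : ∀ w ∈ {z : ℂ | 0 < z.im}, gsq s q w = Paux s q β w := by
    intro w hw
    have hw' : (0:ℝ) < w.im := hw
    exact gsq_eq_Paux s q (fun h => by simp [h] at hw')
  refine ⟨(contDiffOn_Paux s q β).congr hgP, ?_⟩
  intro z hz
  have key : ∀ w, 0 < w.im →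
      fderiv ℝ (gsq s q) w 1
        = (q:ℂ) * Paux s (q-1) β w + 2*β*(w.re:ℂ) * Paux s q (β-1) w ∧
      fderiv ℝ (gsq s q) w Complex.I
        = s * Paux (s-1) q β w - Complex.I*(q:ℂ)*Paux s (q-1) β w
          + 2*β*(w.im:ℂ)*Paux s q (β-1) w := by
    intro w hw
    obtain ⟨D, hD, h1, hI⟩ := hasFDerivAt_Paux s q β hw
    have hev : gsq s q =ᶠ[nhds w] Paux s q β :=
      Filter.eventuallyEq_of_mem (hU.mem_nhds hw) hgP
    rw [(hD.congr_of_eventuallyEq hev).fderiv]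
    exact ⟨h1, hI⟩
  obtain ⟨D1, hD1, hD1x, hD1y⟩ := hasFDerivAt_Paux s (q-1) β hz
  obtain ⟨D2, hD2, hD2x, hD2y⟩ := hasFDerivAt_Paux s q (β-1) hz
  obtain ⟨D3, hD3, hD3x, hD3y⟩ := hasFDerivAt_Paux (s-1) q β hz
  have hre : HasFDerivAt (fun w : ℂ => ((w.re:ℝ):ℂ))
      (Complex.ofRealCLM.comp Complex.reCLM) z :=
    (Complex.ofRealCLM.comp Complex.reCLM).hasFDerivAt
  have him : HasFDerivAt (fun w : ℂ => ((w.im:ℝ):ℂ))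
      (Complex.ofRealCLM.comp Complex.imCLM) z :=
    (Complex.ofRealCLM.comp Complex.imCLM).hasFDerivAt
  have hG1 : HasFDerivAt
      (fun w => (q:ℂ) * Paux s (q-1) β w + 2*β*(w.re:ℂ) * Paux s q (β-1) w)
      ((q:ℂ) • D1 + ((2*β*(z.re:ℂ)) • D2
        + Paux s q (β-1) z • ((2*β) • (Complex.ofRealCLM.comp Complex.reCLM)))) z :=
    (hD1.const_mul (q:ℂ)).add ((hre.const_mul (2*β)).mul hD2)
  have hG2 : HasFDerivAt
      (fun w => s * Paux (s-1) q β w - Complex.I*(q:ℂ)*Paux s (q-1) β w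
        + 2*β*(w.im:ℂ)*Paux s q (β-1) w)
      ((s • D3 - (Complex.I*(q:ℂ)) • D1) + ((2*β*(z.im:ℂ)) • D2
        + Paux s q (β-1) z • ((2*β) • (Complex.ofRealCLM.comp Complex.imCLM)))) z :=
    ((hD3.const_mul s).sub (hD1.const_mul (Complex.I*(q:ℂ)))).add
      ((him.const_mul (2*β)).mul hD2)
  have hx1 : (fun w => fderiv ℝ (gsq s q) w 1) =ᶠ[nhds z]
      (fun w => (q:ℂ) * Paux s (q-1) β w + 2*β*(w.re:ℂ) * Paux s q (β-1) w) :=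
    Filter.eventuallyEq_of_mem (hU.mem_nhds hz) (fun w hw => (key w hw).1)
  have hy1 : (fun w => fderiv ℝ (gsq s q) w Complex.I) =ᶠ[nhds z]
      (fun w => s * Paux (s-1) q β w - Complex.I*(q:ℂ)*Paux s (q-1) β w
        + 2*β*(w.im:ℂ)*Paux s q (β-1) w) :=
    Filter.eventuallyEq_of_mem (hU.mem_nhds hz) (fun w hw => (key w hw).2)
  have hxx : fderiv ℝ (fun w => fderiv ℝ (gsq s q) w 1) z 1
      = (q:ℂ) * (D1 1) + (2*β*(z.re:ℂ)) * (D2 1) + Paux s q (β-1) z * (2*β) := by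
    rw [hx1.fderiv_eq, hG1.fderiv]
    simp [ContinuousLinearMap.add_apply, ContinuousLinearMap.smul_apply,
      ContinuousLinearMap.comp_apply, Complex.reCLM_apply, Complex.ofRealCLM_apply,
      smul_eq_mul]
    ring
  have hyy : fderiv ℝ (fun w => fderiv ℝ (gsq s q) w Complex.I) z Complex.I
      = s * (D3 Complex.I) - (Complex.I*(q:ℂ)) * (D1 Complex.I)
        + (2*β*(z.im:ℂ)) * (D2 Complex.I) + Paux s q (β-1) z * (2*β) := by
    rw [hy1.fderiv_eq, hG2.fderiv]
    simp [ContinuousLinearMap.add_apply, ContinuousLinearMap.sub_apply,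
      ContinuousLinearMap.smul_apply, ContinuousLinearMap.comp_apply,
      Complex.imCLM_apply, Complex.ofRealCLM_apply, smul_eq_mul]
    ring
  rw [hxx, hyy, (key z hz).1, hD1x, hD1y, hD2x, hD2y, hD3y]
  rw [hgP z hz, gsq_eq_Paux (s+2) q (fun h => by simp [h] at hz)]
  have hz0 : z ≠ 0 := fun h => by simp [h] at hz
  have hy0 : ((z.im:ℝ):ℂ) ≠ 0 := by exact_mod_cast hz.ne'
  have hc0 : (starRingEnd ℂ) z ≠ 0 := by simpa using hz0
  have hN0 : ((Complex.normSq z : ℝ):ℂ) ≠ 0 := by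
    exact_mod_cast (Complex.normSq_pos.2 hz0).ne'
  have hs2 : (-(s+2) - (q:ℂ))/2 = β - 1 := by rw [hβ]; ring
  rw [hs2]
  have hP2 : Paux (s+2) q (β-1) z = ((z.im:ℝ):ℂ)^2 * Paux s q (β-1) z := by
    unfold Paux
    rw [Complex.cpow_add _ _ hy0]
    rw [show ((z.im:ℝ):ℂ)^(2:ℂ) = ((z.im:ℝ):ℂ)^(2:ℕ) from ?_]
    · ring
    · rw [show ((2:ℂ)) = ((2:ℕ):ℂ) by norm_num, Complex.cpow_natCast]
  rw [hP2]
  rw [show (s-1-1:ℂ) = s-2 by ring, show (q-1-1:ℤ) = q-2 by ring,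
    show (β-1-1:ℂ) = β-2 by ring]
  have hYs : ((z.im:ℝ):ℂ)^s = ((z.im:ℝ):ℂ)^(s-2) * ((z.im:ℝ):ℂ)^(2:ℕ) := by
    have h := Complex.cpow_add (s-2) 2 hy0
    rw [sub_add_cancel] at h
    rw [h, show ((2:ℂ)) = ((2:ℕ):ℂ) by norm_num, Complex.cpow_natCast]
  have hYs1 : ((z.im:ℝ):ℂ)^(s-1) = ((z.im:ℝ):ℂ)^(s-2) * ((z.im:ℝ):ℂ) := by
    have h := Complex.cpow_add (s-2) 1 hy0
    rw [show (s-2)+(1:ℂ) = s-1 by ring, Complex.cpow_one] at h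
    rw [h]
  have hCq : ((starRingEnd ℂ) z)^q = ((starRingEnd ℂ) z)^(q-2) * ((starRingEnd ℂ) z)^(2:ℕ) := by
    have h := zpow_add₀ hc0 (q-2) 2
    rw [show (q-2)+(2:ℤ) = q by ring] at h
    rw [h, show ((2:ℤ)) = ((2:ℕ):ℤ) by norm_num, zpow_natCast]
  have hCq1 : ((starRingEnd ℂ) z)^(q-1) = ((starRingEnd ℂ) z)^(q-2) * ((starRingEnd ℂ) z) := by
    have h := zpow_add₀ hc0 (q-2) 1
    rw [show (q-2)+(1:ℤ) = q-1 by ring, zpow_one] at h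
    rw [h]
  have hNb : ((Complex.normSq z : ℝ):ℂ)^β = ((Complex.normSq z : ℝ):ℂ)^(β-2) * ((Complex.normSq z : ℝ):ℂ)^(2:ℕ) := by
    have h := Complex.cpow_add (β-2) 2 hN0
    rw [sub_add_cancel] at h
    rw [h, show ((2:ℂ)) = ((2:ℕ):ℂ) by norm_num, Complex.cpow_natCast]
  have hNb1 : ((Complex.normSq z : ℝ):ℂ)^(β-1) = ((Complex.normSq z : ℝ):ℂ)^(β-2) * ((Complex.normSq z : ℝ):ℂ) := by
    have h := Complex.cpow_add (β-2) 1 hN0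
    rw [show (β-2)+(1:ℂ) = β-1 by ring, Complex.cpow_one] at h
    rw [h]
  have hconj : (starRingEnd ℂ) z = ((z.re:ℝ):ℂ) - ((z.im:ℝ):ℂ) * Complex.I := by
    apply Complex.ext <;> simp
  have hns : ((Complex.normSq z : ℝ):ℂ) = ((z.re:ℝ):ℂ)^2 + ((z.im:ℝ):ℂ)^2 := by
    rw [Complex.normSq_apply]; push_cast; ring
  simp only [Paux, hYs, hYs1, hCq, hCq1, hNb, hNb1]
  rw [hβ]
  push_cast
  rw [hconj, hns]
  have hI2 : (Complex.I:ℂ)^2 = -1 := Complex.I_sq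
  have hI3 : (Complex.I:ℂ)^3 = -Complex.I := by rw [pow_succ, hI2]; ring
  have hI4 : (Complex.I:ℂ)^4 = 1 := by rw [show 4 = 2+2 from rfl, pow_add, hI2]; ring
  ring_nf
  simp only [hI2, hI3, hI4, Complex.I_sq]
  ring
end

section
/- For every integer q ≥ 0 and every complex number s with Re s > 1, e^{iπq/2} · ∫₀^π (sin u)^{s−2} e^{−iqu} du = π · 2^{2−s} · Γ(s−1) · (1/Γ((s+q)/2)) · (1/Γ((s−q)/2)). -/
/-!
Write `I_ξ(s) = ∫₀^π (sin u)^(s-2) e^{-iξu} du`. For `ξ = 0` the substitution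
`x = (1 - cos u) / 2 = sin² (u / 2)` turns `I_0(s)` into `2^(s-2) B((s-1)/2, (s-1)/2)`, which the
Beta–Gamma relation and Legendre's duplication formula evaluate. Differentiating
`(sin u)^(s-1) e^{-iξu}` and using `cos u = e^{-iu} + i sin u` gives
`(s - 1) I_{ξ+1}(s) + i (s - 1 - ξ) I_ξ(s + 1) = 0`, the boundary terms vanishing because
`Re s > 1`. Since `1/Γ(z) = z/Γ(z+1)`, `(-i)^q` times the Gamma side obeys the same recurrence,
and induction on `q` concludes.
-/

open MeasureTheory Set Real intervalIntegral

noncomputable def haversine (u : ℝ) : ℝ := (1 - cos u) / 2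

lemma hasDerivAt_haversine (u : ℝ) : HasDerivAt haversine (sin u / 2) u := by
  unfold haversine
  simpa using ((hasDerivAt_cos u).const_sub 1).div_const 2

lemma continuous_haversine : Continuous haversine := by
  unfold haversine; fun_prop

lemma strictMonoOn_haversine : StrictMonoOn haversine (Icc 0 π) := fun _ ha _ hb hab => by
  have := strictAntiOn_cos ha hb hab
  unfold haversine
  linarith

lemma haversine_image_Ioo : haversine '' Ioo 0 π = Ioo 0 1 := by
  rw [continuous_haversine.continuousOn.image_Ioo_of_strictMonoOn pi_pos.le
    strictMonoOn_haversine]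
  norm_num [haversine]

lemma haversine_mul_one_sub (u : ℝ) : haversine u * (1 - haversine u) = (sin u / 2) ^ 2 := by
  unfold haversine
  linear_combination -sin_sq_add_cos_sq u / 4

lemma ofReal_sin_cpow_eq_abs_deriv_haversine_smul (a : ℂ) {u : ℝ} (hu : u ∈ Ioo 0 π) :
    (sin u : ℂ) ^ (2 * a - 1) = |sin u / 2| • ((2 : ℂ) ^ (2 * a - 1) *
      ((haversine u : ℂ) ^ (a - 1) * (1 - (haversine u : ℂ)) ^ (a - 1))) := by
  have ht : 0 < sin u / 2 := by linarith [sin_pos_of_pos_of_lt_pi hu.1 hu.2]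
  have hx : haversine u ∈ Ioo 0 1 := haversine_image_Ioo ▸ mem_image_of_mem _ hu
  have harg : ((sin u / 2 : ℝ) : ℂ).arg = 0 := Complex.arg_ofReal_of_nonneg ht.le
  have hbeta : (haversine u : ℂ) ^ (a - 1) * (1 - (haversine u : ℂ)) ^ (a - 1)
      = ((sin u / 2 : ℝ) : ℂ) ^ (2 * (a - 1)) := by
    rw [show (1 : ℂ) - haversine u = ((1 - haversine u : ℝ) : ℂ) by push_cast; ring,
      ← Complex.mul_cpow_ofReal_nonneg hx.1.le (by linarith [hx.2]), ← Complex.ofReal_mul,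
      haversine_mul_one_sub, Complex.cpow_ofNat_mul' (by rw [harg]; linarith [pi_pos])
        (by rw [harg]; linarith [pi_pos]), Complex.ofReal_pow]
  have hsin : (sin u : ℂ) = (2 : ℝ) * (sin u / 2 : ℝ) := by push_cast; ring
  rw [hbeta, abs_of_pos ht, Complex.real_smul, hsin,
    Complex.mul_cpow_ofReal_nonneg zero_le_two ht.le,
    show 2 * a - 1 = 2 * (a - 1) + 1 by ring,
    Complex.cpow_add _ _ (Complex.ofReal_ne_zero.2 ht.ne'), Complex.cpow_one]
  push_cast
  ring

lemma integrableOn_sin_cpow {w : ℂ} (hw : -1 < w.re) :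
    IntegrableOn (fun u : ℝ => (sin u : ℂ) ^ w) (Ioo 0 π) := by
  obtain ⟨a, rfl⟩ : ∃ a, w = 2 * a - 1 := ⟨(w + 1) / 2, by ring⟩
  have ha : 0 < a.re := by simp at hw; linarith
  have hbeta : IntegrableOn
      (fun x : ℝ => (2 : ℂ) ^ (2 * a - 1) * ((x : ℂ) ^ (a - 1) * (1 - (x : ℂ)) ^ (a - 1)))
      (haversine '' Ioo 0 π) := by
    rw [haversine_image_Ioo]
    exact ((Complex.betaIntegral_convergent ha ha).1.mono_set Ioo_subset_Ioc_self).const_mul _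
  rw [integrableOn_image_iff_integrableOn_abs_deriv_smul measurableSet_Ioo
    (fun u _ => (hasDerivAt_haversine u).hasDerivWithinAt)
    (strictMonoOn_haversine.injOn.mono Ioo_subset_Icc_self)] at hbeta
  refine hbeta.congr_fun (fun u hu => ?_) measurableSet_Ioo
  exact (ofReal_sin_cpow_eq_abs_deriv_haversine_smul a hu).symm

lemma integral_sin_cpow {w : ℂ} (hw : -1 < w.re) :
    ∫ u in (0)..π, (sin u : ℂ) ^ w
      = 2 ^ w * Complex.betaIntegral ((w + 1) / 2) ((w + 1) / 2) := by
  obtain ⟨a, rfl⟩ : ∃ a, w = 2 * a - 1 := ⟨(w + 1) / 2, by ring⟩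
  have hsub := integral_image_eq_integral_abs_deriv_smul measurableSet_Ioo
    (fun u _ => (hasDerivAt_haversine u).hasDerivWithinAt)
    (strictMonoOn_haversine.injOn.mono Ioo_subset_Icc_self)
    (fun x : ℝ => (2 : ℂ) ^ (2 * a - 1) * ((x : ℂ) ^ (a - 1) * (1 - (x : ℂ)) ^ (a - 1)))
  rw [haversine_image_Ioo, MeasureTheory.integral_const_mul] at hsub
  rw [show (2 * a - 1 + 1) / 2 = a by ring, Complex.betaIntegral, integral_of_le zero_le_one,
    integral_Ioc_eq_integral_Ioo, hsub, integral_of_le pi_pos.le, integral_Ioc_eq_integral_Ioo]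
  refine setIntegral_congr_fun measurableSet_Ioo (fun u hu => ?_)
  exact ofReal_sin_cpow_eq_abs_deriv_haversine_smul a hu

noncomputable def sinFourierIntegral (ξ : ℝ) (s : ℂ) : ℂ :=
  ∫ u in (0)..π, (sin u : ℂ) ^ (s - 2) * Complex.exp (-ξ * Complex.I * u)

noncomputable def gammaQuotient (ξ s : ℂ) : ℂ :=
  π * 2 ^ (2 - s) * Complex.Gamma (s - 1) * (Complex.Gamma ((s + ξ) / 2))⁻¹ *
    (Complex.Gamma ((s - ξ) / 2))⁻¹

lemma sinFourierIntegral_zero {s : ℂ} (hs : 1 < s.re) :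
    sinFourierIntegral 0 s = gammaQuotient 0 s := by
  have hG1 : Complex.Gamma (s - 1) ≠ 0 := Complex.Gamma_ne_zero_of_re_pos (by simp; linarith)
  have hG2 : Complex.Gamma (s / 2) ≠ 0 := Complex.Gamma_ne_zero_of_re_pos (by simp; linarith)
  have hbeta := Complex.Gamma_mul_Gamma_eq_betaIntegral (s := (s - 1) / 2) (t := (s - 1) / 2)
    (by simp; linarith) (by simp; linarith)
  have hdup := Complex.Gamma_mul_Gamma_add_half ((s - 1) / 2)
  rw [show (s - 1) / 2 + (s - 1) / 2 = s - 1 by ring] at hbeta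
  rw [show (s - 1) / 2 + 1 / 2 = s / 2 by ring, show 2 * ((s - 1) / 2) = s - 1 by ring,
    show (1 : ℂ) - (s - 1) = 2 - s by ring] at hdup
  have hpow : (2 : ℂ) ^ (s - 2) * 2 ^ (2 - s) = 1 := by
    rw [← Complex.cpow_add _ _ two_ne_zero, sub_add_sub_cancel', sub_self, Complex.cpow_zero]
  have hpi : ((√π : ℝ) : ℂ) ^ 2 = π := by
    rw [← Complex.ofReal_pow, sq_sqrt pi_pos.le]
  simp only [sinFourierIntegral, gammaQuotient, Complex.ofReal_zero, neg_zero, zero_mul,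
    Complex.exp_zero, mul_one, add_zero, sub_zero]
  rw [integral_sin_cpow (by simp; linarith), show (s - 2 + 1) / 2 = (s - 1) / 2 by ring]
  field_simp
  refine mul_left_cancel₀ hG1 ?_
  linear_combination (-(2 : ℂ) ^ (s - 2) * Complex.Gamma (s / 2) ^ 2) * hbeta
    + 2 ^ (s - 2) * (Complex.Gamma ((s - 1) / 2) * Complex.Gamma (s / 2)
      + Complex.Gamma (s - 1) * 2 ^ (2 - s) * (√π : ℝ)) * hdup
    + Complex.Gamma (s - 1) ^ 2 * 2 ^ (2 - s) * ((√π : ℝ) ^ 2 * hpow + hpi)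

lemma continuousOn_sin_cpow {w : ℂ} (hw : 0 < w.re) :
    ContinuousOn (fun u : ℝ => (sin u : ℂ) ^ w) (Icc 0 π) := fun u hu => by
  have hsin : 0 ≤ (sin u : ℂ).re := by
    rw [Complex.ofReal_re]; exact sin_nonneg_of_nonneg_of_le_pi hu.1 hu.2
  exact ((Complex.continuousAt_cpow_const_of_re_pos (Or.inl hsin) hw).comp
    (f := fun v : ℝ => (sin v : ℂ)) (by fun_prop)).continuousWithinAt

lemma hasDerivAt_sin_cpow (w : ℂ) {u : ℝ} (hu : 0 < sin u) :
    HasDerivAt (fun v : ℝ => (sin v : ℂ) ^ w) (w * (sin u : ℂ) ^ (w - 1) * cos u) u :=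
  HasDerivAt.comp (h₂ := fun z : ℂ => z ^ w) u
    (Complex.hasStrictDerivAt_cpow_const (Complex.ofReal_mem_slitPlane.2 hu)).hasDerivAt
    (hasDerivAt_sin u).ofReal_comp

lemma intervalIntegrable_sin_cpow_mul_exp (ξ : ℝ) {w : ℂ} (hw : -1 < w.re) :
    IntervalIntegrable (fun u : ℝ => (sin u : ℂ) ^ w * Complex.exp (-ξ * Complex.I * u))
      volume 0 π := by
  rw [intervalIntegrable_iff_integrableOn_Ioo_of_le pi_pos.le]
  refine (integrableOn_sin_cpow hw).mul_bdd (c := 1) (by fun_prop) (ae_of_all _ fun u => ?_)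
  rw [Complex.norm_exp]
  simp

lemma hasDerivAt_sin_cpow_mul_exp (ξ : ℝ) (s : ℂ) {u : ℝ} (hu : 0 < sin u) :
    HasDerivAt (fun v : ℝ => (sin v : ℂ) ^ (s - 1) * Complex.exp (-ξ * Complex.I * v))
      ((s - 1) * ((sin u : ℂ) ^ (s - 2) * Complex.exp (-(ξ + 1 : ℝ) * Complex.I * u))
        + Complex.I * (s - 1 - ξ) * ((sin u : ℂ) ^ (s - 1) * Complex.exp (-ξ * Complex.I * u)))
      u := by
  have hexp : HasDerivAt (fun v : ℝ => Complex.exp (-ξ * Complex.I * v))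
      (Complex.exp (-ξ * Complex.I * u) * (-ξ * Complex.I)) u := by
    simpa using ((hasDerivAt_id u).ofReal_comp.const_mul (-ξ * Complex.I)).cexp
  refine ((hasDerivAt_sin_cpow (s - 1) hu).mul hexp).congr_deriv ?_
  have hcos : (cos u : ℂ) = Complex.exp (-u * Complex.I) + Complex.I * sin u := by
    rw [Complex.exp_mul_I, Complex.cos_neg, Complex.sin_neg, Complex.ofReal_cos,
      Complex.ofReal_sin]
    ring
  have hpow : (sin u : ℂ) ^ (s - 1) = (sin u : ℂ) ^ (s - 2) * sin u := by
    rw [show s - 1 = s - 2 + 1 by ring,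
      Complex.cpow_add _ _ (Complex.ofReal_ne_zero.2 hu.ne'), Complex.cpow_one]
  have hshift : Complex.exp (-(ξ + 1 : ℝ) * Complex.I * u)
      = Complex.exp (-ξ * Complex.I * u) * Complex.exp (-u * Complex.I) := by
    rw [← Complex.exp_add]; push_cast; ring_nf
  rw [hshift, show s - 1 - 1 = s - 2 by ring, hcos, hpow]
  ring

lemma sinFourierIntegral_recurrence (ξ : ℝ) {s : ℂ} (hs : 1 < s.re) :
    (s - 1) * sinFourierIntegral (ξ + 1) s
      + Complex.I * (s - 1 - ξ) * sinFourierIntegral ξ (s + 1) = 0 := by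
  have hint₁ := intervalIntegrable_sin_cpow_mul_exp (ξ + 1) (w := s - 2) (by simp; linarith)
  have hint₂ := intervalIntegrable_sin_cpow_mul_exp ξ (w := s - 1) (by simp; linarith)
  have hcont : ContinuousOn
      (fun v : ℝ => (sin v : ℂ) ^ (s - 1) * Complex.exp (-ξ * Complex.I * v)) (Icc 0 π) :=
    (continuousOn_sin_cpow (by simp; linarith)).mul (by fun_prop)
  have hFTC := integral_eq_sub_of_hasDerivAt_of_le pi_pos.le hcont
    (fun u hu => hasDerivAt_sin_cpow_mul_exp ξ s (sin_pos_of_pos_of_lt_pi hu.1 hu.2))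
    ((hint₁.const_mul (s - 1)).add (hint₂.const_mul _))
  have hzero : (0 : ℂ) ^ (s - 1) = 0 :=
    Complex.zero_cpow fun h => by simp [sub_eq_zero.1 h] at hs
  rw [integral_add (hint₁.const_mul _) (hint₂.const_mul _), intervalIntegral.integral_const_mul,
    intervalIntegral.integral_const_mul] at hFTC
  rw [sinFourierIntegral, sinFourierIntegral, show s + 1 - 2 = s - 1 by ring, hFTC]
  simp [sin_pi, hzero]

lemma gammaQuotient_recurrence (ξ : ℂ) {s : ℂ} (hs : s ≠ 1) :
    (s - 1) * gammaQuotient (ξ + 1) s = (s - 1 - ξ) * gammaQuotient ξ (s + 1) := by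
  have hΓ : Complex.Gamma (s + 1 - 1) = (s - 1) * Complex.Gamma (s - 1) := by
    rw [add_sub_cancel_right, ← Complex.Gamma_add_one _ (sub_ne_zero.2 hs), sub_add_cancel]
  have hinv := Complex.one_div_Gamma_eq_self_mul_one_div_Gamma_add_one ((s - (ξ + 1)) / 2)
  have hpow : (2 : ℂ) ^ (2 - s) = 2 * 2 ^ (2 - (s + 1)) := by
    rw [show (2 : ℂ) - s = 1 + (2 - (s + 1)) by ring, Complex.cpow_add _ _ two_ne_zero,
      Complex.cpow_one]
  rw [show (s - (ξ + 1)) / 2 + 1 = (s + 1 - ξ) / 2 by ring] at hinv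
  rw [gammaQuotient, gammaQuotient, hΓ, hinv, hpow,
    show (s + (ξ + 1)) / 2 = (s + 1 + ξ) / 2 by ring]
  ring

lemma sinFourierIntegral_natCast (q : ℕ) {s : ℂ} (hs : 1 < s.re) :
    sinFourierIntegral q s = (-Complex.I) ^ q * gammaQuotient q s := by
  induction q generalizing s with
  | zero => simpa using sinFourierIntegral_zero hs
  | succ q ih =>
    have hs1 : s - 1 ≠ 0 := fun h => by simp [sub_eq_zero.1 h] at hs
    have hrec := sinFourierIntegral_recurrence q hs
    have hΓrec := gammaQuotient_recurrence q (sub_ne_zero.1 hs1)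
    have ih' := ih (s := s + 1) (by simp; linarith)
    push_cast at hrec ⊢
    refine mul_left_cancel₀ hs1 ?_
    linear_combination hrec - Complex.I * (s - 1 - q) * ih' - (-Complex.I) ^ (q + 1) * hΓrec

/-- for every integer `q ≥ 0` and `Re s > 1`,
`e^{iπq/2} ∫₀^π (sin u)^{s−2} e^{−iqu} du = π·2^{2−s}·Γ(s−1)·(1/Γ((s+q)/2))·(1/Γ((s−q)/2))`. -/
theorem bq_gamma_formula (q : ℕ) (s : ℂ) (hs : 1 < s.re) :
    Complex.exp (Real.pi * Complex.I * q / 2) *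
        ∫ u in (0:ℝ)..Real.pi,
          ((Real.sin u : ℂ) ^ (s - 2)) * Complex.exp (-(q : ℂ) * Complex.I * u)
      = (Real.pi : ℂ) * (2 : ℂ) ^ ((2 : ℂ) - s) * Complex.Gamma (s - 1) *
          (Complex.Gamma ((s + q) / 2))⁻¹ * (Complex.Gamma ((s - q) / 2))⁻¹ := by
  have hphase : Complex.exp (π * Complex.I * q / 2) = Complex.I ^ q := by
    rw [show (π : ℂ) * Complex.I * q / 2 = q * (π / 2 * Complex.I) by ring, Complex.exp_nat_mul,
      Complex.exp_pi_div_two_mul_I]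
  have hintegral := sinFourierIntegral_natCast q hs
  rw [sinFourierIntegral, Complex.ofReal_natCast] at hintegral
  rw [hphase, hintegral, gammaQuotient, ← mul_assoc, ← mul_pow, mul_neg, Complex.I_mul_I,
    neg_neg, one_pow, one_mul]
end
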